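/- arXiv:2512.07686 — 4 statements merged into one kernel-verified Lean document; each statement's English description precedes it below -/
import Mathlib

section
/- If E ⊆ ℝ^d with E ≠ ℝ^d and α > 1/2, then E is not α-winning on ℝ^d for Schmidt's game. -/
/-- Points of `ℝ^d` with the max norm. -/
abbrev Vec (d : ℕ) := Fin d → ℝ

/-- A closed ball given by its center and radius. -/
abbrev Ball (d : ℕ) := Vec d × ℝ

/-- The closed ball determined by a center-radius pair. -/
def cball {d : ℕ} (b : Ball d) : Set (Vec d) := Metric.closedBall b.1 b.2

/-- Schmidt's `(α,γ)`-game on `K`: the set `S` is `(α,γ)`-winning on `K` if Alice has a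
strategy (a function from the history of Bob's balls to her next ball) such that for every
legal play of Bob, Alice's moves are legal (centered in `K`, nested, radius ratio `α`) and
the intersection of Bob's balls is contained in `S`. -/
def SchmidtWin (d : ℕ) (K : Set (Vec d)) (α γ : ℝ) (S : Set (Vec d)) : Prop :=
  ∃ σ : List (Ball d) → Ball d,
    ∀ B : ℕ → Ball d,
      (((B 0).1 ∈ K ∧ 0 < (B 0).2) ∧
        ∀ k : ℕ, (B (k+1)).1 ∈ K ∧
          cball (B (k+1)) ⊆ cball (σ ((List.range (k+1)).map B)) ∧
          (B (k+1)).2 = γ * (σ ((List.range (k+1)).map B)).2) →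
      ((∀ k : ℕ, (σ ((List.range (k+1)).map B)).1 ∈ K ∧
          cball (σ ((List.range (k+1)).map B)) ⊆ cball (B k) ∧
          (σ ((List.range (k+1)).map B)).2 = α * (B k).2) ∧
        (⋂ k : ℕ, cball (B k)) ⊆ S)

/-- `S` is `α`-winning on `K` if it is `(α,γ)`-winning on `K` for every `γ ∈ (0,1)`. -/
def AlphaWin (d : ℕ) (K : Set (Vec d)) (α : ℝ) (S : Set (Vec d)) : Prop :=
  ∀ γ ∈ Set.Ioo (0:ℝ) 1, SchmidtWin d K α γ S

/-- Bob's response to Alice's ball `A`: recenter at `x₀` if legal, else stay at Alice's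
center; radius is `γ` times Alice's radius. -/
noncomputable def nextBall {d : ℕ} (x₀ : Vec d) (γ : ℝ) (A : Ball d) : Ball d :=
  open Classical in
  if Metric.closedBall x₀ (γ * A.2) ⊆ cball A then (x₀, γ * A.2) else (A.1, γ * A.2)

lemma nextBall_snd {d : ℕ} (x₀ : Vec d) (γ : ℝ) (A : Ball d) :
    (nextBall x₀ γ A).2 = γ * A.2 := by
  unfold nextBall; split <;> rfl

lemma cball_nextBall_subset {d : ℕ} (x₀ : Vec d) {γ : ℝ} (hγ0 : 0 < γ) (hγ1 : γ < 1)
    (A : Ball d) : cball (nextBall x₀ γ A) ⊆ cball A := by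
  unfold nextBall
  split_ifs with h
  · simpa [cball] using h
  · rcases le_or_gt 0 A.2 with hs | hs
    · simp only [cball]
      exact Metric.closedBall_subset_closedBall (by nlinarith)
    · have : γ * A.2 < 0 := by nlinarith
      simp only [cball, Metric.closedBall_eq_empty.2 this, Set.empty_subset]

lemma nextBall_fst {d : ℕ} {x₀ : Vec d} {γ : ℝ} {A : Ball d}
    (h : Metric.closedBall x₀ (γ * A.2) ⊆ cball A) : (nextBall x₀ γ A).1 = x₀ := by
  unfold nextBall
  split_ifs
  rfl

/-- Bob's play against strategy `σ`, as a list of his balls `B 0, …, B k`. -/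
noncomputable def bobList {d : ℕ} (σ : List (Ball d) → Ball d) (x₀ : Vec d) (γ : ℝ) :
    ℕ → List (Ball d)
  | 0 => [(x₀, 1)]
  | k+1 => bobList σ x₀ γ k ++ [nextBall x₀ γ (σ (bobList σ x₀ γ k))]

/-- Bob's play against strategy `σ`, as a sequence. -/
noncomputable def bob {d : ℕ} (σ : List (Ball d) → Ball d) (x₀ : Vec d) (γ : ℝ) :
    ℕ → Ball d
  | 0 => (x₀, 1)
  | k+1 => nextBall x₀ γ (σ (bobList σ x₀ γ k))

lemma bobList_eq {d : ℕ} (σ : List (Ball d) → Ball d) (x₀ : Vec d) (γ : ℝ) (k : ℕ) :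
    (List.range (k+1)).map (bob σ x₀ γ) = bobList σ x₀ γ k := by
  induction k with
  | zero => rfl
  | succ k ih =>
    rw [List.range_succ, List.map_append, ih]
    rfl

/-- In a nontrivial real normed space, a ball inclusion controls the distance of centers. -/
lemma dist_add_le_of_closedBall_subset {V : Type*} [NormedAddCommGroup V] [NormedSpace ℝ V]
    [Nontrivial V] {a x : V} {s r : ℝ} (hs : 0 ≤ s)
    (h : Metric.closedBall a s ⊆ Metric.closedBall x r) : dist a x + s ≤ r := by
  have hdist : ∀ (b u : V), u ≠ 0 → dist (b + (s / ‖u‖) • u) b = s := by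
    intro b u hu
    rw [dist_eq_norm, add_sub_cancel_left, norm_smul, Real.norm_eq_abs, abs_div,
      abs_of_nonneg hs, abs_norm, div_mul_cancel₀ _ (norm_pos_iff.2 hu).ne']
  rcases eq_or_ne a x with rfl | hax
  · obtain ⟨u, hu⟩ := exists_ne (0 : V)
    have hy : a + (s / ‖u‖) • u ∈ Metric.closedBall a s :=
      Metric.mem_closedBall.2 (hdist a u hu).le
    have hmem := h hy
    rw [Metric.mem_closedBall, hdist a u hu] at hmem
    simpa using hmem
  · have hsub : a - x ≠ 0 := sub_ne_zero.2 hax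
    have hu' : 0 < ‖a - x‖ := norm_pos_iff.2 hsub
    have hy : a + (s / ‖a - x‖) • (a - x) ∈ Metric.closedBall a s :=
      Metric.mem_closedBall.2 (hdist a _ hsub).le
    have hmem := h hy
    have key : a + (s / ‖a - x‖) • (a - x) - x = (1 + s / ‖a - x‖) • (a - x) := by
      rw [add_smul, one_smul]; abel
    rw [Metric.mem_closedBall, dist_eq_norm, key, norm_smul, Real.norm_eq_abs,
      abs_of_nonneg (by positivity), add_mul, one_mul, div_mul_cancel₀ _ hu'.ne'] at hmem
    rw [dist_eq_norm]
    linarith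

/-- If `E ≠ ℝ^d` and `α > 1/2`, then `E` is not `α`-winning on `ℝ^d`. -/
theorem stmt2 (d : ℕ) (E : Set (Vec d)) (hE : E ≠ Set.univ) (α : ℝ) (hα : 1/2 < α) :
    ¬ AlphaWin d Set.univ α E := by
  intro hwin
  have hα0 : 0 < α := by linarith
  obtain ⟨x₀, hx₀⟩ : ∃ x, x ∉ E := by
    by_contra h
    push_neg at h
    exact hE (Set.eq_univ_of_forall h)
  set γ : ℝ := 1 - 1 / (2 * α) with hγdef
  have h2α : (0:ℝ) < 2 * α := by linarith
  have hinv : 0 < 1 / (2 * α) := by positivity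
  have hinv1 : 1 / (2 * α) < 1 := by rw [div_lt_one h2α]; linarith
  have hγ0 : 0 < γ := by simp only [hγdef]; linarith
  have hγ1 : γ < 1 := by simp only [hγdef]; linarith
  have hkey : 1 ≤ (2 - γ) * α := by
    have : (2 - γ) * α = α + 1/2 := by
      field_simp [hγdef]
      have h3 : 1 / (2 * α) * α = 1 / 2 := by
        rw [div_mul_eq_mul_div, one_mul, div_eq_iff h2α.ne']; ring
      linear_combination (-2 * α) * hγdef + 2 * h3
    rw [this]; linarith
  obtain ⟨σ, hσ⟩ := hwin γ ⟨hγ0, hγ1⟩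
  set B : ℕ → Ball d := bob σ x₀ γ with hB
  have hcond : ((B 0).1 ∈ Set.univ ∧ 0 < (B 0).2) ∧
      ∀ k : ℕ, (B (k+1)).1 ∈ Set.univ ∧
        cball (B (k+1)) ⊆ cball (σ ((List.range (k+1)).map B)) ∧
        (B (k+1)).2 = γ * (σ ((List.range (k+1)).map B)).2 := by
    refine ⟨⟨trivial, one_pos⟩, fun k => ⟨trivial, ?_, ?_⟩⟩
    · rw [hB, bobList_eq]
      exact cball_nextBall_subset x₀ hγ0 hγ1 _
    · rw [hB, bobList_eq]
      exact nextBall_snd _ _ _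
  obtain ⟨hA, hsub⟩ := hσ B hcond
  have hcenter : ∀ k, (B k).1 = x₀ ∧ 0 < (B k).2 := by
    intro k
    induction k with
    | zero => exact ⟨rfl, one_pos⟩
    | succ k ih =>
      obtain ⟨hc, hr⟩ := ih
      obtain ⟨-, hsubA, hrA⟩ := hA k
      rw [bobList_eq] at hsubA hrA
      set A := σ (bobList σ x₀ γ k) with hAdef
      have hs : 0 < A.2 := by rw [hrA]; positivity
      have hdist : dist A.1 x₀ ≤ (1 - γ) * A.2 := by
        rcases isEmpty_or_nonempty (Fin d) with hempty | hne
        · have : A.1 = x₀ := Subsingleton.elim _ _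
          rw [this, dist_self]
          nlinarith
        · have : Nontrivial (Vec d) := by
            obtain ⟨i⟩ := hne
            exact ⟨fun _ => 0, fun _ => 1, fun h => by
              have := congrFun h i; norm_num at this⟩
          have hincl : Metric.closedBall A.1 A.2 ⊆ Metric.closedBall (B k).1 (B k).2 := hsubA
          rw [hc] at hincl
          have h1 : dist A.1 x₀ + A.2 ≤ (B k).2 :=
            dist_add_le_of_closedBall_subset hs.le hincl
          have h2 : (B k).2 ≤ (2 - γ) * A.2 := by
            have : (B k).2 = A.2 / α := by rw [hrA]; field_simp
            rw [this, div_le_iff₀ hα0]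
            nlinarith
          linarith
      have hballs : Metric.closedBall x₀ (γ * A.2) ⊆ cball A := by
        intro y hy
        rw [Metric.mem_closedBall] at hy
        have : dist y A.1 ≤ dist y x₀ + dist x₀ A.1 := dist_triangle _ _ _
        rw [dist_comm x₀ A.1] at this
        simp only [cball, Metric.mem_closedBall]
        nlinarith
      constructor
      · show (bob σ x₀ γ (k+1)).1 = x₀
        rw [bob]
        exact nextBall_fst hballs
      · show 0 < (bob σ x₀ γ (k+1)).2
        rw [bob, nextBall_snd]
        positivity
  have hx₀mem : x₀ ∈ ⋂ k : ℕ, cball (B k) := by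
    refine Set.mem_iInter.2 fun k => ?_
    obtain ⟨hc, hr⟩ := hcenter k
    simp only [cball, Metric.mem_closedBall, hc, dist_self]
    exact hr.le
  exact hx₀ (hsub hx₀mem)
end

section
/- The support of an absolutely decaying Borel probability measure on ℝ^d is hyperplane diffuse. -/
/-- A `(d-1)`-dimensional affine hyperplane of `ℝ^d`. -/
def IsHyperplane {d : ℕ} (L : Set (Vec d)) : Prop :=
  ∃ (u : Vec d) (c : ℝ), u ≠ 0 ∧ L = {x : Vec d | ∑ i, u i * x i = c}

/-- `E` is hyperplane diffuse: for some `γ > 0` and `r0 > 0`, for every `x ∈ E`, every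
affine hyperplane `L` and every `0 < r ≤ r0`, the set `(B(x,r) \ (L)_{γr}) ∩ E` is
nonempty. -/
def HyperplaneDiffuse {d : ℕ} (E : Set (Vec d)) : Prop :=
  ∃ γ : ℝ, 0 < γ ∧ ∃ r0 : ℝ, 0 < r0 ∧ ∀ x ∈ E, ∀ L : Set (Vec d), IsHyperplane L →
    ∀ r : ℝ, 0 < r → r ≤ r0 →
      ((Metric.ball x r \ Metric.thickening (γ * r) L) ∩ E).Nonempty

open MeasureTheory
open scoped ENNReal

/-- The (topological) support of a measure. -/
def msupport {X : Type*} [PseudoMetricSpace X] [MeasurableSpace X]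
    (μ : Measure X) : Set X :=
  {x | ∀ r : ℝ, 0 < r → 0 < μ (Metric.ball x r)}

/-- `μ` is absolutely decaying: there are `C, r0, s > 0` such that
`μ(B(x,r) ∩ (L)_{γ r}) ≤ C γ^s μ(B(x,r))` for all `x ∈ supp μ`, `0 < r ≤ r0`,
`0 < γ ≤ 1` and affine hyperplanes `L`. -/
def AbsolutelyDecaying {d : ℕ} (μ : Measure (Vec d)) : Prop :=
  ∃ C : ℝ, 0 < C ∧ ∃ r0 : ℝ, 0 < r0 ∧ ∃ s : ℝ, 0 < s ∧
    ∀ x ∈ msupport μ, ∀ r : ℝ, 0 < r → r ≤ r0 → ∀ γ : ℝ, 0 < γ → γ ≤ 1 →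
      ∀ L : Set (Vec d), IsHyperplane L →
        μ (Metric.ball x r ∩ Metric.thickening (γ * r) L) ≤
          ENNReal.ofReal (C * γ ^ s) * μ (Metric.ball x r)

/-- The complement of the support has measure zero (second countable space). -/
lemma msupport_compl_null {X : Type*} [PseudoMetricSpace X] [MeasurableSpace X]
    [SecondCountableTopology X] (μ : Measure X) : μ (msupport μ)ᶜ = 0 := by
  apply measure_null_of_locally_null
  intro x hx
  simp only [msupport, Set.mem_compl_iff, Set.mem_setOf_eq, not_forall] at hx
  obtain ⟨r, hr, hμr⟩ := hx
  refine ⟨Metric.ball x r, ?_, by simpa using hμr⟩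
  exact mem_nhdsWithin_of_mem_nhds (Metric.ball_mem_nhds x hr)

/-- A set of positive measure meets the support. -/
lemma nonempty_inter_msupport {X : Type*} [PseudoMetricSpace X] [MeasurableSpace X]
    [SecondCountableTopology X] {μ : Measure X} {A : Set X} (hA : 0 < μ A) :
    (A ∩ msupport μ).Nonempty := by
  rw [Set.nonempty_iff_ne_empty]
  intro hcon
  have hsub : A ⊆ (msupport μ)ᶜ := by
    intro a ha
    intro hmem
    exact Set.eq_empty_iff_forall_notMem.1 hcon a ⟨ha, hmem⟩
  have : μ A ≤ μ (msupport μ)ᶜ := measure_mono hsub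
  rw [msupport_compl_null μ] at this
  exact absurd (le_antisymm this zero_le) (ne_of_gt hA)

/-- The support of an absolutely decaying Borel probability measure on `ℝ^d` is
hyperplane diffuse. -/
theorem stmt4 (d : ℕ) (μ : Measure (Vec d)) [IsProbabilityMeasure μ]
    (h : AbsolutelyDecaying μ) : HyperplaneDiffuse (msupport μ) := by
  obtain ⟨C, hC, r0, hr0, s, hs, habs⟩ := h
  set γ : ℝ := min 1 ((2 * C)⁻¹ ^ (1 / s)) with hγdef
  have h2C : (0:ℝ) < (2 * C)⁻¹ := by positivity
  have hγpos : 0 < γ := lt_min one_pos (Real.rpow_pos_of_pos h2C _)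
  have hγ1 : γ ≤ 1 := min_le_left _ _
  have hγs : C * γ ^ s ≤ 1 / 2 := by
    have h1 : γ ^ s ≤ ((2 * C)⁻¹ ^ (1 / s)) ^ s :=
      Real.rpow_le_rpow hγpos.le (min_le_right _ _) hs.le
    have h2 : ((2 * C)⁻¹ ^ (1 / s)) ^ s = (2 * C)⁻¹ := by
      rw [← Real.rpow_mul h2C.le, one_div_mul_cancel (ne_of_gt hs), Real.rpow_one]
    rw [h2] at h1
    calc C * γ ^ s ≤ C * (2 * C)⁻¹ := by
          exact mul_le_mul_of_nonneg_left h1 hC.le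
      _ = 1 / 2 := by field_simp
  refine ⟨γ, hγpos, r0, hr0, fun x hx L hL r hr hrr0 => ?_⟩
  have hB : 0 < μ (Metric.ball x r) := hx r hr
  have hBfin : μ (Metric.ball x r) ≠ ⊤ := measure_ne_top μ _
  have hkey := habs x hx r hr hrr0 γ hγpos hγ1 L hL
  have hle : μ (Metric.ball x r ∩ Metric.thickening (γ * r) L) <
      μ (Metric.ball x r) := by
    calc μ (Metric.ball x r ∩ Metric.thickening (γ * r) L)
        ≤ ENNReal.ofReal (C * γ ^ s) * μ (Metric.ball x r) := hkey
      _ ≤ ENNReal.ofReal (1 / 2) * μ (Metric.ball x r) := by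
          exact mul_le_mul_left (ENNReal.ofReal_le_ofReal hγs) _
      _ < 1 * μ (Metric.ball x r) := by
          refine ENNReal.mul_lt_mul_left (ne_of_gt hB) hBfin ?_
          rw [← ENNReal.ofReal_one]
          exact ENNReal.ofReal_lt_ofReal_iff_of_nonneg (by norm_num) |>.2 (by norm_num)
      _ = μ (Metric.ball x r) := one_mul _
  have hpos : 0 < μ (Metric.ball x r \ Metric.thickening (γ * r) L) := by
    by_contra hcon
    push_neg at hcon
    have hz : μ (Metric.ball x r \ Metric.thickening (γ * r) L) = 0 :=
      le_antisymm hcon zero_le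
    have := measure_le_inter_add_diff μ (Metric.ball x r) (Metric.thickening (γ * r) L)
    rw [hz, add_zero] at this
    exact absurd (lt_of_le_of_lt this hle) (lt_irrefl _)
  exact nonempty_inter_msupport hpos
end

section
/- Fix γ ∈ (0,1/3) and set ε := 1 − γ/(4+6γ) ∈ (0,1). In the γ-hyperplane absolute game on [0,1]^d, suppose Bob has chosen a closed ball B_k. Then for any N ∈ ℕ, any coordinate j_0 ∈ {1,...,d}, and any points y_1,...,y_N ∈ [0,1], Alice has a single move such that for every legal response ball B_{k+1} of Bob, at least ⌈(1−ε)N⌉ of the coordinate hyperplanes L_i = {x ∈ ℝ^d : x_{j_0} = y_i} satisfy dist(L_i, B_{k+1}) > (γ/4)|B_k|. -/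
/-- The distance between two subsets of `ℝ^d` (max norm). -/
noncomputable def setDist {d : ℕ} (A B : Set (Vec d)) : ℝ :=
  sInf {t : ℝ | ∃ a ∈ A, ∃ b ∈ B, t = dist a b}

lemma order_stat {N : ℕ} (y : Fin N → ℝ) (M : ℕ) (hM : M + M ≤ N + 1) :
    ∃ c : ℝ, M ≤ (Finset.univ.filter fun i => y i ≤ c).card ∧
             M ≤ (Finset.univ.filter fun i => c ≤ y i).card := by
  classical
  rcases Nat.eq_zero_or_pos M with hM0 | hM1
  · exact ⟨0, by simp [hM0]⟩
  have hMN : M ≤ N := by omega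
  have hN : 0 < N := lt_of_lt_of_le hM1 hMN
  haveI : Nonempty (Fin N) := ⟨⟨0, hN⟩⟩
  set T : Finset ℝ := (Finset.univ.image y).filter
      (fun c => M ≤ (Finset.univ.filter fun i => y i ≤ c).card) with hT
  have hTne : T.Nonempty := by
    have hne : (Finset.univ.image y : Finset ℝ).Nonempty := (Finset.univ_nonempty).image y
    refine ⟨(Finset.univ.image y).max' hne, ?_⟩
    rw [hT, Finset.mem_filter]
    refine ⟨Finset.max'_mem _ _, ?_⟩
    have : (Finset.univ.filter fun i => y i ≤ (Finset.univ.image y).max' hne) = Finset.univ := by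
      refine Finset.filter_true_of_mem fun i _ => ?_
      exact Finset.le_max' _ _ (Finset.mem_image_of_mem y (Finset.mem_univ i))
    rw [this, Finset.card_univ, Fintype.card_fin]
    exact hMN
  set c := T.min' hTne with hc
  have hcT : c ∈ T := Finset.min'_mem _ _
  rw [hT, Finset.mem_filter] at hcT
  refine ⟨c, hcT.2, ?_⟩
  -- count of y i < c is < M
  have hlt : (Finset.univ.filter fun i => ¬ c ≤ y i).card < M := by
    by_contra h
    rw [not_lt] at h
    have hBne : (Finset.univ.filter fun i => ¬ c ≤ y i).Nonempty :=
      Finset.card_pos.mp (lt_of_lt_of_le hM1 h)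
    have hSne : ((Finset.univ.filter fun i => ¬ c ≤ y i).image y).Nonempty := hBne.image y
    obtain ⟨i0, hi0B, hi0y⟩ := Finset.mem_image.mp
      (Finset.max'_mem ((Finset.univ.filter fun i => ¬ c ≤ y i).image y) hSne)
    have hc'T : ((Finset.univ.filter fun i => ¬ c ≤ y i).image y).max' hSne ∈ T := by
      rw [hT, Finset.mem_filter]
      constructor
      · rw [← hi0y]
        exact Finset.mem_image_of_mem y (Finset.mem_univ i0)
      · refine le_trans h (Finset.card_le_card ?_)
        intro i hi
        rw [Finset.mem_filter]
        exact ⟨Finset.mem_univ i, Finset.le_max' _ _ (Finset.mem_image_of_mem y hi)⟩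
    have hcc' : c ≤ ((Finset.univ.filter fun i => ¬ c ≤ y i).image y).max' hSne :=
      Finset.min'_le _ _ hc'T
    rw [Finset.mem_filter] at hi0B
    exact hi0B.2 (le_trans hcc' hi0y.symm.le)
  have hsplit := Finset.card_filter_add_card_filter_not
      (s := (Finset.univ : Finset (Fin N))) (p := fun i => c ≤ y i)
  rw [Finset.card_univ, Fintype.card_fin] at hsplit
  omega

/-- One-step avoidance: fix `γ ∈ (0,1/3)` and `ε = 1 - γ/(4+6γ)`. If Bob has chosen a
closed ball `B_k` (centered in `[0,1]^d`, of radius `r > 0`, diameter `2r`), then for any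
`N`, coordinate `j0` and points `y_1, …, y_N ∈ [0,1]`, Alice has a legal move (a
hyperplane `L` and `0 < ε' ≤ γ·|B_k|/2`) such that for every legal response ball
`B_{k+1}` of Bob, at least `⌈(1-ε)N⌉` of the hyperplanes `L_i = {x : x_{j0} = y_i}`
satisfy `dist(L_i, B_{k+1}) > (γ/4)|B_k|`. -/
theorem stmt13 (d : ℕ) (γ : ℝ) (hγ : γ ∈ Set.Ioo (0:ℝ) (1/3))
    (ε : ℝ) (hε : ε = 1 - γ / (4 + 6 * γ))
    (x : Vec d) (r : ℝ) (hx : x ∈ Set.Icc (0:Vec d) 1) (hr : 0 < r)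
    (N : ℕ) (j0 : Fin d) (y : Fin N → ℝ) (hy : ∀ i, y i ∈ Set.Icc (0:ℝ) 1) :
    ∃ (L : Set (Vec d)) (ε' : ℝ), IsHyperplane L ∧ 0 < ε' ∧ ε' ≤ γ * (2 * r) / 2 ∧
      ∀ (x' : Vec d) (r' : ℝ), x' ∈ Set.Icc (0:Vec d) 1 → γ * r ≤ r' →
        Metric.closedBall x' r' ⊆ Metric.closedBall x r \ Metric.thickening ε' L →
        (Nat.ceil ((1 - ε) * N) : ℕ) ≤
          ({i : Fin N | γ / 4 * (2 * r) <
            setDist {z : Vec d | z j0 = y i} (Metric.closedBall x' r')} : Set (Fin N)).ncard := by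
  classical
  obtain ⟨hγ0, hγ3⟩ := hγ
  set M := Nat.ceil ((1 - ε) * N) with hMdef
  -- bound on M
  have hden : (0:ℝ) < 4 + 6 * γ := by linarith
  have hεval : 1 - ε = γ / (4 + 6 * γ) := by rw [hε]; ring
  have hεhalf : 1 - ε ≤ 1/2 := by
    rw [hεval, div_le_iff₀ hden]; linarith
  have h2M : M + M ≤ N + 1 := by
    have hk : M ≤ (N + 1) / 2 := by
      rw [hMdef]
      apply Nat.ceil_le.mpr
      have h1 : (1 - ε) * N ≤ (N : ℝ) / 2 := by
        have := mul_le_mul_of_nonneg_right hεhalf (Nat.cast_nonneg N : (0:ℝ) ≤ N)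
        linarith
      have h2 : (N : ℝ) / 2 ≤ ((N + 1) / 2 : ℕ) := by
        have : N ≤ 2 * ((N + 1) / 2) := by omega
        have := (Nat.cast_le (α := ℝ)).mpr this
        push_cast at this ⊢
        linarith
      linarith
    omega
  obtain ⟨c, hc1, hc2⟩ := order_stat y M h2M
  have hγr : 0 < γ * r := by positivity
  refine ⟨{z : Vec d | z j0 = c}, γ * r, ?_, hγr, by linarith, ?_⟩
  · refine ⟨fun i => if i = j0 then 1 else 0, c, ?_, ?_⟩
    · intro h
      have := congrFun h j0
      simp at this
    · ext z
      simp only [Set.mem_setOf_eq]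
      have : ∑ i, (if i = j0 then (1:ℝ) else 0) * z i = z j0 := by
        rw [Finset.sum_eq_single j0]
        · simp
        · intro b _ hb; simp [hb]
        · simp
      rw [this]
  intro x' r' _ hr' hsub
  have hr'0 : 0 < r' := lt_of_lt_of_le hγr hr'
  -- helper: updated points are in the ball
  have hmem : ∀ t : ℝ, |t - x' j0| ≤ r' →
      Function.update x' j0 t ∈ Metric.closedBall x' r' := by
    intro t ht
    rw [Metric.mem_closedBall, dist_pi_le_iff hr'0.le]
    intro i
    rcases eq_or_ne i j0 with rfl | hi
    · simpa [Function.update_self, Real.dist_eq] using ht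
    · simpa [Function.update_of_ne hi] using hr'0.le
  -- avoidance: every point of Bob's ball is γr-far from the slab
  have havoid : ∀ z ∈ Metric.closedBall x' r', γ * r ≤ |z j0 - c| := by
    intro z hz
    by_contra h
    push_neg at h
    have hzthick : z ∈ Metric.thickening (γ * r) {w : Vec d | w j0 = c} := by
      rw [Metric.mem_thickening_iff]
      refine ⟨Function.update z j0 c, by simp, ?_⟩
      have hle : dist z (Function.update z j0 c) ≤ |z j0 - c| := by
        rw [dist_pi_le_iff (abs_nonneg _)]
        intro i
        rcases eq_or_ne i j0 with rfl | hi
        · simp [Function.update_self, Real.dist_eq]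
        · simp [Function.update_of_ne hi]
      exact lt_of_le_of_lt hle h
    exact (hsub hz).2 hzthick
  -- final counting helper
  have hfinal : ∀ s : Set (Fin N),
      M ≤ s.ncard →
      s ⊆ {i : Fin N | γ / 4 * (2 * r) <
        setDist {z : Vec d | z j0 = y i} (Metric.closedBall x' r')} →
      M ≤ ({i : Fin N | γ / 4 * (2 * r) <
        setDist {z : Vec d | z j0 = y i} (Metric.closedBall x' r')} : Set (Fin N)).ncard :=
    fun s h hss => h.trans (Set.ncard_le_ncard hss (Set.toFinite _))
  -- lower bound on setDist given one-sided separation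
  have hdistbd : ∀ (i : Fin N), (∀ b ∈ Metric.closedBall x' r', γ * r ≤ |y i - b j0|) →
      γ / 4 * (2 * r) < setDist {z : Vec d | z j0 = y i} (Metric.closedBall x' r') := by
    intro i hb
    have hne : {t : ℝ | ∃ a ∈ {z : Vec d | z j0 = y i}, ∃ b ∈ Metric.closedBall x' r',
        t = dist a b}.Nonempty := by
      refine ⟨dist (Function.update x' j0 (y i)) x', Function.update x' j0 (y i), by simp,
        x', Metric.mem_closedBall_self hr'0.le, rfl⟩
    have hlb : γ * r ≤ setDist {z : Vec d | z j0 = y i} (Metric.closedBall x' r') := by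
      apply le_csInf hne
      rintro t ⟨a, ha, b, hbB, rfl⟩
      have h1 : dist (a j0) (b j0) ≤ dist a b := dist_le_pi_dist a b j0
      have h2 : γ * r ≤ |y i - b j0| := hb b hbB
      rw [Set.mem_setOf_eq] at ha
      rw [Real.dist_eq, ha] at h1
      linarith
    have : γ / 4 * (2 * r) < γ * r := by nlinarith
    linarith
  rcases le_total c (x' j0) with hside | hside
  · -- Bob's ball is on the right of the slab
    have hsep : c + γ * r ≤ x' j0 - r' := by
      by_contra h
      push_neg at h
      set t := max (x' j0 - r') c with htdef
      have ht1 : |t - x' j0| ≤ r' := by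
        rw [abs_le]
        constructor
        · have : x' j0 - r' ≤ t := le_max_left _ _
          linarith
        · have : t ≤ x' j0 := max_le (by linarith) hside
          linarith
      have h2 := havoid _ (hmem t ht1)
      rw [Function.update_self] at h2
      have ht2 : c ≤ t := le_max_right _ _
      have ht3 : t < c + γ * r := max_lt (by linarith) (by linarith)
      rw [abs_of_nonneg (by linarith)] at h2
      linarith
    have hkey : ∀ b ∈ Metric.closedBall x' r', c + γ * r ≤ b j0 := by
      intro b hbB
      have h1 : dist (b j0) (x' j0) ≤ dist b x' := dist_le_pi_dist b x' j0
      rw [Metric.mem_closedBall] at hbB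
      rw [Real.dist_eq] at h1
      have := abs_le.mp (le_trans h1 hbB)
      linarith [this.1]
    refine hfinal {i : Fin N | y i ≤ c} ?_ ?_
    · have hset : {i : Fin N | y i ≤ c} = ↑(Finset.univ.filter fun i => y i ≤ c) := by
        ext i; simp
      rw [hset, Set.ncard_coe_finset]; exact hc1
    · intro i hi
      rw [Set.mem_setOf_eq] at hi
      refine hdistbd i fun b hbB => ?_
      have := hkey b hbB
      rw [abs_sub_comm, abs_of_nonneg (by linarith)]
      linarith
  · -- Bob's ball is on the left of the slab
    have hsep : x' j0 + r' ≤ c - γ * r := by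
      by_contra h
      push_neg at h
      set t := min (x' j0 + r') c with htdef
      have ht1 : |t - x' j0| ≤ r' := by
        rw [abs_le]
        constructor
        · have : x' j0 ≤ t := le_min (by linarith) hside
          linarith
        · have : t ≤ x' j0 + r' := min_le_left _ _
          linarith
      have h2 := havoid _ (hmem t ht1)
      rw [Function.update_self] at h2
      have ht2 : t ≤ c := min_le_right _ _
      have ht3 : c - γ * r < t := lt_min (by linarith) (by linarith)
      rw [abs_of_nonpos (by linarith)] at h2
      linarith
    have hkey : ∀ b ∈ Metric.closedBall x' r', b j0 ≤ c - γ * r := by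
      intro b hbB
      have h1 : dist (b j0) (x' j0) ≤ dist b x' := dist_le_pi_dist b x' j0
      rw [Metric.mem_closedBall] at hbB
      rw [Real.dist_eq] at h1
      have := abs_le.mp (le_trans h1 hbB)
      linarith [this.2]
    refine hfinal {i : Fin N | c ≤ y i} ?_ ?_
    · have hset : {i : Fin N | c ≤ y i} = ↑(Finset.univ.filter fun i => c ≤ y i) := by
        ext i; simp
      rw [hset, Set.ncard_coe_finset]; exact hc2
    · intro i hi
      rw [Set.mem_setOf_eq] at hi
      refine hdistbd i fun b hbB => ?_
      have := hkey b hbB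
      rw [abs_of_nonneg (by linarith)]
      linarith
end

section
/- Fix γ ∈ (0,1/3), let ε = 1 − γ/(4+6γ), and let Bob choose a closed ball B_k in the γ-hyperplane absolute game on [0,1]^d. For any N ∈ ℕ, coordinate j_0, and intervals I_1,...,I_N ⊆ [0,1] each of length at most γ^s |B_k|/2, where s = ⌊log_{1/ε} N⌋ + 1, Alice has a strategy over the next s moves ensuring that the ball B_{k+s} is disjoint from ⋃_{i=1}^N {x ∈ ℝ^d : x_{j_0} ∈ I_i}, regardless of Bob's choices. -/
namespace Stmt14Aux

variable {d : ℕ}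

def slab (j0 : Fin d) (p : ℝ) : Set (Vec d) := {z : Vec d | z j0 = p}

lemma isHyperplane_slab (j0 : Fin d) (p : ℝ) : IsHyperplane (slab j0 p) := by
  refine ⟨fun i => if i = j0 then 1 else 0, p, ?_, ?_⟩
  · intro h
    have := congrFun h j0
    simp at this
  · ext z
    have : ∑ i, (if i = j0 then (1:ℝ) else 0) * z i = z j0 := by
      rw [Finset.sum_eq_single j0]
      · simp
      · intro i _ hi; simp [hi]
      · simp
    simp [slab, this]

lemma mem_thickening_slab {j0 : Fin d} {p δ : ℝ} {z : Vec d} (h : |z j0 - p| < δ) :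
    z ∈ Metric.thickening δ (slab j0 p) := by
  rw [Metric.mem_thickening_iff]
  refine ⟨Function.update z j0 p, Function.update_self _ _ _, ?_⟩
  have hle : dist z (Function.update z j0 p) ≤ |z j0 - p| := by
    rw [dist_pi_le_iff (abs_nonneg _)]
    intro i
    rcases eq_or_ne i j0 with rfl | hne
    · simp [Function.update_self, Real.dist_eq]
    · simp [Function.update_of_ne hne]
  exact lt_of_le_of_lt hle h

variable (γ : ℝ) (N : ℕ) (a b : Fin N → ℝ) (j0 : Fin d)

open scoped Classical in
noncomputable def alive (B : Ball d) : Finset (Fin N) :=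
  Finset.univ.filter fun i => a i ≤ B.1 j0 + B.2 ∧ B.1 j0 - B.2 ≤ b i

noncomputable def fidx (B : Ball d) (i : Fin N) : ℤ :=
  ⌊((a i + b i) / 2 - (B.1 j0 - B.2 - γ * B.2 / 2)) / (γ * B.2 / 2)⌋

def PH (B : Ball d) (t : ℤ) : Prop :=
  ((alive N a b j0 B).card : ℝ) * (γ / (4 + 6 * γ)) ≤
    (((alive N a b j0 B).filter fun i => fidx γ N a b j0 B i = t).card : ℝ)

open scoped Classical in
noncomputable def tsel (B : Ball d) : ℤ :=
  if h : ∃ t, PH γ N a b j0 B t then h.choose else 0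

noncomputable def psel (B : Ball d) : ℝ :=
  (B.1 j0 - B.2 - γ * B.2 / 2) + (tsel γ N a b j0 B : ℝ) * (γ * B.2 / 2) + (γ * B.2 / 2) / 2

lemma exists_PH (hγ0 : 0 < γ) (B : Ball d) (hρ : 0 < B.2)
    (hab : ∀ i, a i ≤ b i)
    (hlen : ∀ i, b i - a i ≤ γ * B.2) :
    ∃ t, PH γ N a b j0 B t := by
  classical
  have hw0 : 0 < γ * B.2 / 2 := by positivity
  set M : ℤ := ⌊(4:ℝ) / γ⌋ + 2 with hM
  have hM0 : 0 ≤ M := by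
    have : (0:ℤ) ≤ ⌊(4:ℝ)/γ⌋ := Int.floor_nonneg.2 (by positivity)
    omega
  have hMmem : ∀ i ∈ alive N a b j0 B, fidx γ N a b j0 B i ∈ Finset.Icc 0 M := by
    intro i hi
    simp only [alive, Finset.mem_filter, Finset.mem_univ, true_and] at hi
    obtain ⟨hi1, hi2⟩ := hi
    have hc1 : (0:ℝ) ≤ ((a i + b i) / 2 - (B.1 j0 - B.2 - γ * B.2 / 2)) := by
      have h1 := hlen i
      linarith
    rw [Finset.mem_Icc]
    constructor
    · simp only [fidx]
      exact Int.floor_nonneg.2 (div_nonneg hc1 hw0.le)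
    · simp only [fidx]
      have hle : ((a i + b i) / 2 - (B.1 j0 - B.2 - γ * B.2 / 2)) / (γ * B.2 / 2)
          ≤ (4:ℝ) / γ + 2 := by
        rw [div_le_iff₀ hw0]
        have he : ((4:ℝ) / γ + 2) * (γ * B.2 / 2) = 2 * B.2 + γ * B.2 := by
          field_simp
          ring
        rw [he]
        have h1 := hlen i
        linarith
      calc ⌊((a i + b i) / 2 - (B.1 j0 - B.2 - γ * B.2 / 2)) / (γ * B.2 / 2)⌋
          ≤ ⌊(4:ℝ) / γ + 2⌋ := Int.floor_le_floor hle
        _ = M := by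
            rw [hM]
            rw [show ((4:ℝ)/γ + 2) = (4:ℝ)/γ + ((2:ℤ):ℝ) by norm_num]
            exact Int.floor_add_intCast _ _
  by_contra hno
  push_neg at hno
  simp only [PH, not_le] at hno
  have hsum := Finset.card_eq_sum_card_fiberwise hMmem
  have hlt : (((alive N a b j0 B).card : ℝ)) <
      ∑ _t ∈ Finset.Icc (0:ℤ) M,
        ((alive N a b j0 B).card : ℝ) * (γ / (4 + 6 * γ)) :=
    calc (((alive N a b j0 B).card : ℝ))
        = ∑ t ∈ Finset.Icc (0:ℤ) M,
            (((alive N a b j0 B).filter fun i => fidx γ N a b j0 B i = t).card : ℝ) := by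
          exact_mod_cast hsum
      _ < _ := Finset.sum_lt_sum_of_nonempty ⟨0, Finset.mem_Icc.2 ⟨le_rfl, hM0⟩⟩
          fun t _ => hno t
  rw [Finset.sum_const, nsmul_eq_mul] at hlt
  have hcard : ((Finset.Icc (0:ℤ) M).card : ℝ) = (M:ℝ) + 1 := by
    have h5 : (M + 1 - 0).toNat = M.toNat + 1 := by omega
    rw [Int.card_Icc, h5]
    have h6 : ((M.toNat : ℤ) : ℝ) = (M:ℝ) := by
      rw [Int.toNat_of_nonneg hM0]
    push_cast at h6 ⊢
    linarith
  rw [hcard] at hlt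
  have hM4 : (M:ℝ) + 1 ≤ 4 / γ + 3 := by
    have h1 := Int.floor_le ((4:ℝ) / γ)
    rw [hM]
    push_cast
    linarith
  have hc1 : ((M:ℝ) + 1) * (γ / (4 + 6 * γ)) ≤ 1 := by
    have h1 : (0:ℝ) < 4 + 6 * γ := by linarith
    rw [← mul_div_assoc, div_le_one h1]
    have h2 : ((M:ℝ) + 1) * γ ≤ (4 / γ + 3) * γ :=
      mul_le_mul_of_nonneg_right hM4 hγ0.le
    have h3 : (4 / γ + 3) * γ = 4 + 3 * γ := by
      field_simp
    nlinarith
  have hA0 : (0:ℝ) ≤ ((alive N a b j0 B).card : ℝ) := Nat.cast_nonneg _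
  nlinarith

lemma step (hγ0 : 0 < γ) (B B' : Ball d) (hρ : 0 < B.2)
    (hab : ∀ i, a i ≤ b i)
    (hlen : ∀ i, b i - a i ≤ γ * B.2)
    (hsub : cball B' ⊆ cball B \ Metric.thickening (γ * B.2) (slab j0 (psel γ N a b j0 B)))
    (hρ' : γ * B.2 ≤ B'.2) :
    ((alive N a b j0 B').card : ℝ) ≤
      (1 - γ / (4 + 6 * γ)) * ((alive N a b j0 B).card : ℝ) := by
  classical
  have hex := exists_PH γ N a b j0 hγ0 B hρ hab hlen
  have hPH : PH γ N a b j0 B (tsel γ N a b j0 B) := by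
    rw [tsel, dif_pos hex]
    exact hex.choose_spec
  have hρ'0 : 0 < B'.2 := lt_of_lt_of_le (by positivity) hρ'
  have hupd : ∀ t : ℝ, B'.1 j0 - B'.2 ≤ t → t ≤ B'.1 j0 + B'.2 →
      Function.update B'.1 j0 t ∈ cball B' := by
    intro t h1 h2
    rw [cball, Metric.mem_closedBall, dist_pi_le_iff hρ'0.le]
    intro i
    rcases eq_or_ne i j0 with rfl | hne
    · rw [Function.update_self, Real.dist_eq, abs_le]
      constructor <;> linarith
    · rw [Function.update_of_ne hne]
      simp [hρ'0.le]
  have havoid : ∀ t : ℝ, B'.1 j0 - B'.2 ≤ t → t ≤ B'.1 j0 + B'.2 →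
      γ * B.2 ≤ |t - psel γ N a b j0 B| := by
    intro t h1 h2
    have hz := hsub (hupd t h1 h2)
    by_contra hcon
    push_neg at hcon
    refine hz.2 (mem_thickening_slab ?_)
    rwa [Function.update_self]
  have hcoordB : ∀ t : ℝ, B'.1 j0 - B'.2 ≤ t → t ≤ B'.1 j0 + B'.2 →
      |t - B.1 j0| ≤ B.2 := by
    intro t h1 h2
    have hz := (hsub (hupd t h1 h2)).1
    rw [cball, Metric.mem_closedBall] at hz
    have := dist_le_pi_dist (Function.update B'.1 j0 t) B.1 j0
    rw [Function.update_self, Real.dist_eq] at this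
    linarith
  have hub : B'.1 j0 + B'.2 ≤ B.1 j0 + B.2 := by
    have := hcoordB (B'.1 j0 + B'.2) (by linarith) le_rfl
    rw [abs_le] at this
    linarith [this.2]
  have hlb : B.1 j0 - B.2 ≤ B'.1 j0 - B'.2 := by
    have := hcoordB (B'.1 j0 - B'.2) le_rfl (by linarith)
    rw [abs_le] at this
    linarith [this.1]
  have hmono : ∀ i ∈ alive N a b j0 B', i ∈ alive N a b j0 B := by
    intro i hi
    simp only [alive, Finset.mem_filter, Finset.mem_univ, true_and] at hi ⊢
    exact ⟨le_trans hi.1 hub, le_trans hlb hi.2⟩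
  have hkill : ∀ i ∈ alive N a b j0 B', fidx γ N a b j0 B i ≠ tsel γ N a b j0 B := by
    intro i hi heq
    simp only [alive, Finset.mem_filter, Finset.mem_univ, true_and] at hi
    obtain ⟨hi1, hi2⟩ := hi
    have hw0 : 0 < γ * B.2 / 2 := by positivity
    have h1 : ((tsel γ N a b j0 B : ℝ)) ≤
        ((a i + b i) / 2 - (B.1 j0 - B.2 - γ * B.2 / 2)) / (γ * B.2 / 2) := by
      rw [← heq]
      exact Int.floor_le _
    have h2 : ((a i + b i) / 2 - (B.1 j0 - B.2 - γ * B.2 / 2)) / (γ * B.2 / 2) <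
        (tsel γ N a b j0 B : ℝ) + 1 := by
      rw [← heq]
      push_cast
      exact Int.lt_floor_add_one _
    rw [le_div_iff₀ hw0] at h1
    rw [div_lt_iff₀ hw0] at h2
    -- c := (a i + b i)/2 satisfies |c - psel| ≤ w/2
    have hcp : |(a i + b i) / 2 - psel γ N a b j0 B| ≤ (γ * B.2 / 2) / 2 := by
      rw [psel, abs_le]
      constructor <;> nlinarith
    rw [abs_le] at hcp
    have hlen_i := hlen i
    have hab_i := hab i
    -- interval within 3w/2 of psel
    have hai : psel γ N a b j0 B - 3 * (γ * B.2 / 2) / 2 ≤ a i := by nlinarith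
    have hbi : b i ≤ psel γ N a b j0 B + 3 * (γ * B.2 / 2) / 2 := by nlinarith
    set t0 := max (a i) (B'.1 j0 - B'.2) with ht0
    have ht0a : B'.1 j0 - B'.2 ≤ t0 := le_max_right _ _
    have ht0b : t0 ≤ B'.1 j0 + B'.2 := max_le hi1 (by linarith)
    have hav := havoid t0 ht0a ht0b
    have ht0l : psel γ N a b j0 B - 3 * (γ * B.2 / 2) / 2 ≤ t0 :=
      le_trans hai (le_max_left _ _)
    have ht0r : t0 ≤ psel γ N a b j0 B + 3 * (γ * B.2 / 2) / 2 :=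
      max_le (by linarith) (by linarith)
    have habs : |t0 - psel γ N a b j0 B| ≤ 3 * (γ * B.2 / 2) / 2 := by
      rw [abs_le]
      constructor <;> linarith
    nlinarith [abs_nonneg (t0 - psel γ N a b j0 B)]
  have hsubset : alive N a b j0 B' ⊆
      (alive N a b j0 B) \ ((alive N a b j0 B).filter
        fun i => fidx γ N a b j0 B i = tsel γ N a b j0 B) := by
    intro i hi
    rw [Finset.mem_sdiff]
    exact ⟨hmono i hi, fun hf => hkill i hi (Finset.mem_filter.1 hf).2⟩
  have h1 : (alive N a b j0 B').card ≤
      (alive N a b j0 B).card - ((alive N a b j0 B).filter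
        fun i => fidx γ N a b j0 B i = tsel γ N a b j0 B).card := by
    calc (alive N a b j0 B').card ≤ _ := Finset.card_le_card hsubset
      _ = _ := Finset.card_sdiff_of_subset (Finset.filter_subset _ _)
  have h2 : ((alive N a b j0 B).filter
      fun i => fidx γ N a b j0 B i = tsel γ N a b j0 B).card ≤
      (alive N a b j0 B).card := Finset.card_le_card (Finset.filter_subset _ _)
  have h1' : ((alive N a b j0 B').card : ℝ) ≤
      ((alive N a b j0 B).card : ℝ) - (((alive N a b j0 B).filter
        fun i => fidx γ N a b j0 B i = tsel γ N a b j0 B).card : ℝ) := by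
    have := Nat.cast_le (α := ℝ) |>.2 h1
    rwa [Nat.cast_sub h2] at this
  rw [PH] at hPH
  linarith

end Stmt14Aux

/-- Iterated avoidance: fix `γ ∈ (0,1/3)`, `ε = 1 - γ/(4+6γ)` and
`s = ⌊log_{1/ε} N⌋ + 1`. If Bob has chosen a closed ball `B_k` of radius `r` (diameter
`2r`) centered in `[0,1]^d`, then for any coordinate `j0` and intervals
`I_1, …, I_N ⊆ [0,1]` of length at most `γ^s |B_k| / 2`, Alice has a strategy over the
next `s` moves of the `γ`-hyperplane absolute game ensuring that her moves are legal and
that Bob's ball `B_{k+s}` is disjoint from `⋃ i, {x : x_{j0} ∈ I_i}`, whatever Bob's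
legal responses are. -/
theorem stmt14 (d : ℕ) (γ : ℝ) (hγ : γ ∈ Set.Ioo (0:ℝ) (1/3))
    (ε : ℝ) (hε : ε = 1 - γ / (4 + 6 * γ))
    (x : Vec d) (r : ℝ) (hx : x ∈ Set.Icc (0:Vec d) 1) (hr : 0 < r)
    (N : ℕ) (hN : 0 < N) (j0 : Fin d)
    (s : ℕ) (hs : s = Nat.floor (Real.logb (1/ε) N) + 1)
    (J : Fin N → Set ℝ)
    (hJ : ∀ i, ∃ a b : ℝ, a ≤ b ∧ b - a ≤ γ ^ s * (2 * r) / 2 ∧ J i = Set.Icc a b ∧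
      Set.Icc a b ⊆ Set.Icc (0:ℝ) 1) :
    ∃ σ : List (Ball d) → Set (Vec d) × ℝ,
      ∀ B : ℕ → Ball d, B 0 = (x, r) →
        (∀ k < s, (B (k+1)).1 ∈ Set.Icc (0:Vec d) 1 ∧
          cball (B (k+1)) ⊆ cball (B k) \ Metric.thickening (σ ((List.range (k+1)).map B)).2
              (σ ((List.range (k+1)).map B)).1 ∧
          γ * (B k).2 ≤ (B (k+1)).2) →
        ((∀ k < s, IsHyperplane (σ ((List.range (k+1)).map B)).1 ∧
            0 < (σ ((List.range (k+1)).map B)).2 ∧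
            (σ ((List.range (k+1)).map B)).2 ≤ γ * (B k).2) ∧
          Disjoint (cball (B s)) (⋃ i : Fin N, {z : Vec d | z j0 ∈ J i})) := by
  obtain ⟨hγ0, hγ13⟩ := hγ
  have hεc1 : 0 < γ / (4 + 6 * γ) := div_pos hγ0 (by linarith)
  have hεc2 : γ / (4 + 6 * γ) < 1 := by
    rw [div_lt_one (by linarith)]; linarith
  have hε0 : 0 < ε := by rw [hε]; linarith
  have hε1 : ε < 1 := by rw [hε]; linarith
  classical
  choose a b hab hlen hJeq hJsub using hJ
  refine ⟨fun hist =>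
      (Stmt14Aux.slab j0 (Stmt14Aux.psel γ N a b j0 (hist.getLast?.getD (x, r))),
        γ * (hist.getLast?.getD (x, r)).2), ?_⟩
  intro B hB0 hBob
  have hlast : ∀ k : ℕ, (((List.range (k+1)).map B).getLast?.getD (x, r)) = B k := by
    intro k
    rw [List.range_succ, List.map_append]
    simp
  simp only [hlast] at hBob ⊢
  have Inv : ∀ k, k ≤ s → γ ^ k * r ≤ (B k).2 ∧
      ((Stmt14Aux.alive N a b j0 (B k)).card : ℝ) ≤ (N:ℝ) * ε ^ k := by
    intro k
    induction k with
    | zero =>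
      intro _
      constructor
      · rw [hB0]; norm_num
      · simp only [pow_zero, mul_one]
        have h1 : (Stmt14Aux.alive N a b j0 (B 0)).card ≤ N := by
          calc (Stmt14Aux.alive N a b j0 (B 0)).card
              ≤ (Finset.univ : Finset (Fin N)).card := Finset.card_le_univ _
            _ = N := by simp
        exact_mod_cast h1
    | succ k ih =>
      intro hk1
      have hks : k < s := hk1
      obtain ⟨hr1, hc1⟩ := ih (Nat.le_of_succ_le hk1)
      obtain ⟨-, hsub, hrad⟩ := hBob k hks
      have hρk : 0 < (B k).2 := lt_of_lt_of_le (by positivity) hr1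
      have hlenk : ∀ i, b i - a i ≤ γ * (B k).2 := by
        intro i
        have h1 : γ ^ s ≤ γ ^ (k+1) :=
          pow_le_pow_of_le_one hγ0.le (by linarith) hk1
        have h2 := hlen i
        have h3 : γ ^ s * r ≤ γ ^ (k+1) * r :=
          mul_le_mul_of_nonneg_right h1 hr.le
        have h4 : γ * (γ ^ k * r) ≤ γ * (B k).2 :=
          mul_le_mul_of_nonneg_left hr1 hγ0.le
        calc b i - a i ≤ γ ^ s * (2*r) / 2 := h2
          _ = γ ^ s * r := by ring
          _ ≤ γ ^ (k+1) * r := h3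
          _ = γ * (γ ^ k * r) := by ring
          _ ≤ γ * (B k).2 := h4
      have hstep := Stmt14Aux.step γ N a b j0 hγ0 (B k) (B (k+1)) hρk hab hlenk hsub hrad
      refine ⟨?_, ?_⟩
      · have h4 : γ * (γ ^ k * r) ≤ γ * (B k).2 :=
          mul_le_mul_of_nonneg_left hr1 hγ0.le
        calc γ ^ (k+1) * r = γ * (γ ^ k * r) := by ring
          _ ≤ γ * (B k).2 := h4
          _ ≤ (B (k+1)).2 := hrad
      · calc ((Stmt14Aux.alive N a b j0 (B (k+1))).card : ℝ)
            ≤ (1 - γ / (4 + 6*γ)) * ((Stmt14Aux.alive N a b j0 (B k)).card : ℝ) := hstep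
          _ = ε * ((Stmt14Aux.alive N a b j0 (B k)).card : ℝ) := by rw [hε]
          _ ≤ ε * ((N:ℝ) * ε ^ k) := mul_le_mul_of_nonneg_left hc1 hε0.le
          _ = (N:ℝ) * ε ^ (k+1) := by ring
  constructor
  · intro k hk
    have hρk : 0 < (B k).2 := lt_of_lt_of_le (by positivity) (Inv k hk.le).1
    exact ⟨Stmt14Aux.isHyperplane_slab _ _, mul_pos hγ0 hρk, le_rfl⟩
  · have hcard := (Inv s le_rfl).2
    have hb1 : (1:ℝ) < 1/ε := one_lt_one_div hε0 hε1
    have hN1 : (1:ℝ) ≤ (N:ℝ) := by exact_mod_cast hN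
    have hlogs : Real.logb (1/ε) N < (s:ℝ) := by
      rw [hs]
      push_cast
      exact Nat.lt_floor_add_one _
    have hNlt : (N:ℝ) < (1/ε) ^ s := by
      have h1 : (1/ε) ^ (Real.logb (1/ε) N : ℝ) = (N:ℝ) :=
        Real.rpow_logb (by positivity) (ne_of_gt hb1) (by exact_mod_cast hN)
      calc (N:ℝ) = (1/ε) ^ (Real.logb (1/ε) N : ℝ) := h1.symm
        _ < (1/ε) ^ (s:ℝ) := (Real.rpow_lt_rpow_left_iff hb1).2 hlogs
        _ = (1/ε) ^ s := Real.rpow_natCast _ s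
    have hfin : (N:ℝ) * ε ^ s < 1 := by
      have h2 : (0:ℝ) < ε ^ s := pow_pos hε0 s
      have h3 : ((1:ℝ)/ε) ^ s * ε ^ s = 1 := by
        rw [← mul_pow]
        rw [one_div_mul_cancel hε0.ne']
        exact one_pow s
      calc (N:ℝ) * ε ^ s < (1/ε) ^ s * ε ^ s := by nlinarith
        _ = 1 := h3
    have hA0 : Stmt14Aux.alive N a b j0 (B s) = ∅ := by
      have h5 : ((Stmt14Aux.alive N a b j0 (B s)).card : ℝ) < 1 :=
        lt_of_le_of_lt hcard hfin
      have h6 : (Stmt14Aux.alive N a b j0 (B s)).card < 1 := by exact_mod_cast h5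
      exact Finset.card_eq_zero.1 (Nat.lt_one_iff.1 h6)
    rw [Set.disjoint_left]
    intro z hz hz2
    simp only [Set.mem_iUnion, Set.mem_setOf_eq] at hz2
    obtain ⟨i, hzi⟩ := hz2
    rw [hJeq i] at hzi
    obtain ⟨hzi1, hzi2⟩ := hzi
    have hcoord : |z j0 - (B s).1 j0| ≤ (B s).2 := by
      rw [cball, Metric.mem_closedBall] at hz
      have h7 := dist_le_pi_dist z (B s).1 j0
      rw [Real.dist_eq] at h7
      linarith
    rw [abs_le] at hcoord
    have hin : i ∈ Stmt14Aux.alive N a b j0 (B s) := by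
      simp only [Stmt14Aux.alive, Finset.mem_filter, Finset.mem_univ, true_and]
      constructor <;> linarith [hcoord.1, hcoord.2]
    rw [hA0] at hin
    exact absurd hin (Finset.notMem_empty i)
end
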